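/- arXiv:2309.15473 — 6 statements merged into one kernel-verified Lean document; each statement's English description precedes it below -/
import Mathlib

section
/- For every positive integer $s$, $\sum_{\tau \in P_s} (|\tau|-1)! \le (3/2)^s (s-1)!$, where $P_s$ is the set of set partitions of $\{1,\dots,s\}$ and $|\tau|$ denotes the number of blocks of $\tau$. -/
/-
Write `f S = ∑_P (#P - 1)!` over the partitions `P` of `S`. Fix `a ∈ S`: the factor
`(#P - 1)!` is `(#P - 1) * (#P - 2)!`, i.e. a sum over the `#P - 1` blocks `B` of `P` avoiding `a`,
and `P ↦ (B, P.erase B)` turns this into the recursion `f S = 1 + ∑_{∅ ≠ B ⊆ S \ {a}} f (S \ B)`.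
Inductively `f S ≤ (3/2)^n (n-1)!` for `n = #S`, where the step, divided by `(3/2)^n (n-1)!`,
becomes `∑_{k=1}^{n-2} (2/3)^k / k! + 2 (2/3)^n / (n-1)! ≤ 1`, essentially `e^{2/3} - 1 < 1`.
-/

/-- The finset of unordered partitions of `Fin s` into nonempty blocks,
represented as finsets of pairwise-disjoint nonempty blocks covering `Fin s`. -/
def setPartitions (s : ℕ) : Finset (Finset (Finset (Fin s))) :=
  Finset.univ.filter fun P =>
    (∀ B ∈ P, B.Nonempty) ∧ ∀ i : Fin s, (P.filter fun B => i ∈ B).card = 1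

open Finset
open scoped Nat

variable {α : Type*} [DecidableEq α]

def partitionsOf (S : Finset α) : Finset (Finset (Finset α)) :=
  S.powerset.powerset.filter fun P =>
    (∀ B ∈ P, B.Nonempty) ∧ ∀ i ∈ S, #{B ∈ P | i ∈ B} = 1

section partitionsOf

variable {S B : Finset α} {P Q : Finset (Finset α)}

lemma mem_partitionsOf : P ∈ partitionsOf S ↔
    (∀ B ∈ P, B ⊆ S) ∧ (∀ B ∈ P, B.Nonempty) ∧ ∀ i ∈ S, #{B ∈ P | i ∈ B} = 1 := by
  simp only [partitionsOf, mem_filter, mem_powerset, subset_iff (s₁ := P)]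

lemma partitionsOf_empty : partitionsOf (∅ : Finset α) = {∅} := by
  ext P
  simp only [mem_partitionsOf, subset_empty, notMem_empty, mem_singleton]
  constructor
  · rintro ⟨hsub, hne, -⟩
    exact eq_empty_of_forall_notMem fun B hB => (hne B hB).ne_empty (hsub B hB)
  · rintro rfl
    simp

lemma singleton_mem_partitionsOf (hS : S.Nonempty) : {S} ∈ partitionsOf S :=
  mem_partitionsOf.2 ⟨by simp, by simpa using hS,
    fun i hi => by rw [filter_singleton, if_pos hi, card_singleton]⟩

lemma eq_of_mem_of_mem_partitionsOf (hP : P ∈ partitionsOf S) {C : Finset α} (hB : B ∈ P)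
    (hC : C ∈ P) {i : α} (hiB : i ∈ B) (hiC : i ∈ C) : B = C := by
  obtain ⟨hsub, -, hunique⟩ := mem_partitionsOf.1 hP
  exact card_le_one.1 (hunique i (hsub B hB hiB)).le B (by simp [hB, hiB]) C (by simp [hC, hiC])

lemma card_eq_card_filter_notMem_add_one (hP : P ∈ partitionsOf S) {a : α} (ha : a ∈ S) :
    #P = #{B ∈ P | a ∉ B} + 1 := by
  rw [← (mem_partitionsOf.1 hP).2.2 a ha, add_comm, card_filter_add_card_filter_not]

lemma eq_singleton_iff_forall_mem (hP : P ∈ partitionsOf S) {a : α} (ha : a ∈ S) :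
    P = {S} ↔ ∀ B ∈ P, a ∈ B := by
  refine ⟨by rintro rfl; simpa using ha, fun h => ?_⟩
  obtain ⟨hsub, -, hunique⟩ := mem_partitionsOf.1 hP
  obtain ⟨B₀, hB₀⟩ := card_eq_one.1 (hunique a ha)
  have hblocks : ∀ B ∈ P, B = B₀ := fun B hB => by
    simpa [hB₀] using (mem_filter.2 ⟨hB, h B hB⟩ : B ∈ P.filter (a ∈ ·))
  have hB₀P : B₀ ∈ P := (mem_filter.1 (hB₀ ▸ mem_singleton_self B₀)).1
  have hB₀S : B₀ = S := (hsub B₀ hB₀P).antisymm fun i hi => by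
    obtain ⟨C, hC⟩ := card_eq_one.1 (hunique i hi)
    obtain ⟨hCP, hiC⟩ := mem_filter.1 (hC ▸ mem_singleton_self C)
    exact hblocks C hCP ▸ hiC
  rw [eq_singleton_iff_unique_mem, ← hB₀S]
  exact ⟨hB₀P, hblocks⟩

lemma erase_mem_partitionsOf (hP : P ∈ partitionsOf S) (hB : B ∈ P) :
    P.erase B ∈ partitionsOf (S \ B) := by
  obtain ⟨hsub, hne, hunique⟩ := mem_partitionsOf.1 hP
  refine mem_partitionsOf.2 ⟨fun C hC x hx => ?_, fun C hC => hne C (mem_of_mem_erase hC),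
    fun i hi => ?_⟩
  · have hCP := mem_of_mem_erase hC
    exact mem_sdiff.2 ⟨hsub C hCP hx,
      fun hxB => ne_of_mem_erase hC (eq_of_mem_of_mem_partitionsOf hP hCP hB hx hxB)⟩
  · rw [mem_sdiff] at hi
    rw [filter_erase, erase_eq_of_notMem (by simp [hi.2])]
    exact hunique i hi.1

lemma notMem_of_mem_partitionsOf_sdiff (hB : B.Nonempty) (hQ : Q ∈ partitionsOf (S \ B)) :
    B ∉ Q := fun hBQ => by
  obtain ⟨x, hx⟩ := hB
  exact (mem_sdiff.1 ((mem_partitionsOf.1 hQ).1 B hBQ hx)).2 hx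

lemma insert_mem_partitionsOf (hB : B.Nonempty) (hBS : B ⊆ S) (hQ : Q ∈ partitionsOf (S \ B)) :
    insert B Q ∈ partitionsOf S := by
  obtain ⟨hsub, hne, hunique⟩ := mem_partitionsOf.1 hQ
  refine mem_partitionsOf.2 ⟨?_, ?_, fun i hi => ?_⟩
  · simpa using ⟨hBS, fun C hC => (hsub C hC).trans sdiff_subset⟩
  · simpa using ⟨hB, hne⟩
  · rw [filter_insert]
    by_cases hiB : i ∈ B
    · have : Q.filter (i ∈ ·) = ∅ :=
        filter_eq_empty_iff.2 fun C hC hiC => (mem_sdiff.1 (hsub C hC hiC)).2 hiB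
      simp [hiB, this]
    · simpa [hiB] using hunique i (mem_sdiff.2 ⟨hi, hiB⟩)

lemma sum_partitionsOf_filter_mem {M : Type*} [AddCommMonoid M] (hB : B.Nonempty) (hBS : B ⊆ S)
    (f : Finset (Finset α) → M) :
    ∑ P ∈ partitionsOf S with B ∈ P, f (P.erase B) = ∑ Q ∈ partitionsOf (S \ B), f Q := by
  refine sum_nbij' (·.erase B) (insert B) (fun P hP => ?_) (fun Q hQ => ?_)
    (fun P hP => insert_erase (mem_filter.1 hP).2) (fun Q hQ => erase_insert ?_) fun _ _ => rfl
  · obtain ⟨hP, hBP⟩ := mem_filter.1 hP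
    exact erase_mem_partitionsOf hP hBP
  · exact mem_filter.2 ⟨insert_mem_partitionsOf hB hBS hQ, mem_insert_self B Q⟩
  · exact notMem_of_mem_partitionsOf_sdiff hB hQ

end partitionsOf

/-- `(#P - 1)!` is the number of cyclic orders on the blocks of `P`. -/
def cyclicPartitionCount (S : Finset α) : ℕ := ∑ P ∈ partitionsOf S, (#P - 1)!

section cyclicPartitionCount

variable {S : Finset α} {a : α}

lemma cyclicPartitionCount_empty : cyclicPartitionCount (∅ : Finset α) = 1 := by
  simp [cyclicPartitionCount, partitionsOf_empty]

lemma factorial_card_sub_one_eq {P : Finset (Finset α)} (hP : P ∈ partitionsOf S) (ha : a ∈ S) :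
    (#P - 1)! = (if P = {S} then 1 else 0) + ∑ B ∈ P with a ∉ B, (#(P.erase B) - 1)! := by
  have hsingleton : P = {S} ↔ #{B ∈ P | a ∉ B} = 0 := by
    rw [eq_singleton_iff_forall_mem hP ha, card_eq_zero, filter_eq_empty_iff]
    simp
  have hsum : ∑ B ∈ P with a ∉ B, (#(P.erase B) - 1)! = #{B ∈ P | a ∉ B} * (#P - 1 - 1)! :=
    sum_const_nat fun B hB => by rw [card_erase_of_mem (mem_filter.1 hB).1]
  rw [hsum, card_eq_card_filter_notMem_add_one hP ha, Nat.add_sub_cancel]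
  split_ifs with h
  · simp [hsingleton.1 h]
  · rw [zero_add, Nat.mul_factorial_pred (hsingleton.not.1 h)]

lemma cyclicPartitionCount_eq_one_add_sum (ha : a ∈ S) :
    cyclicPartitionCount S =
      1 + ∑ B ∈ (S.erase a).powerset with B.Nonempty, cyclicPartitionCount (S \ B) := by
  have hS : S.Nonempty := ⟨a, ha⟩
  have hswap : ∀ P B, P ∈ partitionsOf S ∧ B ∈ P.filter (a ∉ ·) ↔
      P ∈ (partitionsOf S).filter (B ∈ ·) ∧ B ∈ (S.erase a).powerset.filter Finset.Nonempty := by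
    intro P B
    simp only [mem_filter, mem_powerset, subset_erase]
    constructor
    · rintro ⟨hP, hBP, haB⟩
      exact ⟨⟨hP, hBP⟩, ⟨(mem_partitionsOf.1 hP).1 B hBP, haB⟩, (mem_partitionsOf.1 hP).2.1 B hBP⟩
    · rintro ⟨⟨hP, hBP⟩, ⟨-, haB⟩, -⟩
      exact ⟨hP, hBP, haB⟩
  unfold cyclicPartitionCount
  rw [sum_congr rfl fun P hP => factorial_card_sub_one_eq hP ha, sum_add_distrib, sum_ite_eq',
    if_pos (singleton_mem_partitionsOf hS), sum_comm' hswap (f := fun P B => (#(P.erase B) - 1)!)]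
  refine congrArg (fun n : ℕ => 1 + n) (sum_congr rfl fun B hB => ?_)
  obtain ⟨hB, hBne⟩ := mem_filter.1 hB
  exact sum_partitionsOf_filter_mem hBne ((mem_powerset.1 hB).trans (erase_subset a S))
    fun Q => (#Q - 1)!

end cyclicPartitionCount

/-- From `m = 1` on the left side decreases in `m`, and at `m = 1` it is `26 / 27`. -/
lemma sum_pow_div_factorial_add_le_one (m : ℕ) :
    ∑ k ∈ Icc 1 m, (2 / 3 : ℝ) ^ k / k ! + 2 * (2 / 3) ^ (m + 2) / (m + 1)! ≤ 1 := by
  rcases Nat.eq_zero_or_pos m with rfl | hm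
  · norm_num
  induction m, hm using Nat.le_induction with
  | base => norm_num [Nat.factorial]
  | succ m hm ih =>
    set q : ℝ := (2 / 3) ^ (m + 1) / (m + 1)! with hq_def
    have hq : 0 ≤ q := by positivity
    have h1 : (2 / 3 : ℝ) ^ (m + 1 + 2) / (m + 1 + 1)! = q * (4 / 9 / (m + 2)) := by
      rw [hq_def, Nat.factorial_succ, Nat.cast_mul]; push_cast; field_simp; ring
    have h2 : (2 / 3 : ℝ) ^ (m + 2) / (m + 1)! = q * (2 / 3) := by rw [hq_def]; ring
    have h3 : 4 / 9 / (m + 2 : ℝ) ≤ 4 / 27 := by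
      rw [div_le_iff₀ (by positivity)]
      have : (1 : ℝ) ≤ m := by exact_mod_cast hm
      linarith
    rw [sum_Icc_succ_top (by omega), mul_div_assoc, h1]
    rw [mul_div_assoc, h2] at ih
    nlinarith

/-- At `n = 1` the bound is sharpened to the exact value `1`: with `3 / 2` there the induction
step would already fail at `n = 2`. -/
noncomputable def cyclicBound (n : ℕ) : ℝ := if n = 1 then 1 else (3 / 2) ^ n * (n - 1)!

lemma cyclicBound_le (n : ℕ) : cyclicBound n ≤ (3 / 2) ^ n * (n - 1)! := by
  unfold cyclicBound
  split_ifs with h <;> norm_num [h]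

lemma choose_mul_cyclicBound {m k : ℕ} (hkm : k ≤ m) :
    (m + 1).choose k * cyclicBound (m + 2 - k) =
      (3 / 2) ^ (m + 2) * (m + 1)! * ((2 / 3) ^ k / k !) := by
  rw [cyclicBound, if_neg (by omega), show m + 2 - k - 1 = m + 1 - k by omega,
    ← pow_sub_mul_pow (3 / 2 : ℝ) (show k ≤ m + 2 by omega),
    ← Nat.choose_mul_factorial_mul_factorial (show k ≤ m + 1 by omega)]
  have hinv : (2 / 3 : ℝ) ^ k = ((3 / 2) ^ k)⁻¹ := by rw [← inv_pow]; norm_num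
  rw [hinv]
  push_cast
  field_simp

lemma one_add_sum_choose_mul_cyclicBound_le (m : ℕ) :
    1 + ∑ k ∈ Icc 1 m, (m.choose k : ℝ) * cyclicBound (m + 1 - k) ≤ cyclicBound (m + 1) := by
  rcases m with _ | m
  · simp [cyclicBound]
  have hterm : ∀ k ∈ Icc 1 m, ((m + 1).choose k : ℝ) * cyclicBound (m + 1 + 1 - k) =
      (3 / 2) ^ (m + 2) * (m + 1)! * ((2 / 3) ^ k / k !) := fun k hk =>
    choose_mul_cyclicBound (mem_Icc.1 hk).2
  have hone : cyclicBound 1 = 1 := if_pos rfl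
  have htop : cyclicBound (m + 1 + 1) = (3 / 2) ^ (m + 2) * (m + 1)! := if_neg (by omega)
  have htwo : (3 / 2 : ℝ) ^ (m + 2) * (m + 1)! * (2 * (2 / 3) ^ (m + 2) / (m + 1)!) = 2 := by
    calc _ = 2 * ((3 / 2 : ℝ) ^ (m + 2) * (2 / 3) ^ (m + 2)) * ((m + 1)! / (m + 1)!) := by ring
      _ = 2 := by rw [← mul_pow, div_self (by positivity)]; norm_num
  rw [sum_Icc_succ_top (by omega), Nat.choose_self, Nat.add_sub_cancel_left, sum_congr rfl hterm,
    ← mul_sum, hone, htop]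
  have := sum_pow_div_factorial_add_le_one m
  have hpos : (0 : ℝ) < (3 / 2) ^ (m + 2) * (m + 1)! := by positivity
  nlinarith

lemma sum_powerset_filter_nonempty_card {β M : Type*} [AddCommMonoid M] (T : Finset β)
    (f : ℕ → M) :
    ∑ B ∈ T.powerset with B.Nonempty, f #B = ∑ k ∈ Icc 1 #T, (#T).choose k • f k := by
  have hIcc : Icc 1 #T = {k ∈ range (#T + 1) | k ≠ 0} := by
    ext k; simp only [mem_Icc, mem_filter, mem_range]; omega
  simp_rw [← card_ne_zero, sum_filter, hIcc, sum_filter]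
  rw [sum_powerset_apply_card (fun k => if k ≠ 0 then f k else 0)]
  simp_rw [smul_ite, smul_zero]

lemma cyclicPartitionCount_le_cyclicBound (S : Finset α) :
    (cyclicPartitionCount S : ℝ) ≤ cyclicBound #S := by
  induction S using Finset.strongInduction with
  | H S ih =>
  obtain rfl | ⟨a, ha⟩ := S.eq_empty_or_nonempty
  · simp [cyclicPartitionCount_empty, cyclicBound]
  obtain ⟨m, hm⟩ : ∃ m, #S = m + 1 := ⟨#S - 1, by have := card_pos.2 ⟨a, ha⟩; omega⟩
  have hT : #(S.erase a) = m := by rw [card_erase_of_mem ha, hm, Nat.add_sub_cancel]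
  calc (cyclicPartitionCount S : ℝ)
      = 1 + ∑ B ∈ (S.erase a).powerset with B.Nonempty, (cyclicPartitionCount (S \ B) : ℝ) := by
        rw [cyclicPartitionCount_eq_one_add_sum ha, Nat.cast_add, Nat.cast_one, Nat.cast_sum]
    _ ≤ 1 + ∑ B ∈ (S.erase a).powerset with B.Nonempty, cyclicBound (m + 1 - #B) := by
        gcongr with B hB
        obtain ⟨hBT, hBne⟩ := mem_filter.1 hB
        have hBS : B ⊆ S := (mem_powerset.1 hBT).trans (erase_subset a S)
        rw [← hm, ← card_sdiff_of_subset hBS]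
        exact ih _ (sdiff_ssubset hBS hBne)
    _ = 1 + ∑ k ∈ Icc 1 m, (m.choose k : ℝ) * cyclicBound (m + 1 - k) := by
        rw [sum_powerset_filter_nonempty_card _ fun k => cyclicBound (m + 1 - k), hT]
        simp_rw [nsmul_eq_mul]
    _ ≤ cyclicBound #S := hm ▸ one_add_sum_choose_mul_cyclicBound_le m

theorem setPartitions_eq_partitionsOf_univ (s : ℕ) : setPartitions s = partitionsOf univ := by
  ext P
  simp [setPartitions, mem_partitionsOf]

theorem sum_blocks_factorial_le_general (s : ℕ) :
    ∑ τ ∈ setPartitions s, ((Nat.factorial (τ.card - 1)) : ℝ) ≤ (3 / 2) ^ s * (Nat.factorial (s-1)) := by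
  have h := cyclicPartitionCount_le_cyclicBound (univ : Finset (Fin s))
  rw [card_univ, Fintype.card_fin] at h
  rw [setPartitions_eq_partitionsOf_univ, ← Nat.cast_sum]
  exact h.trans (cyclicBound_le s)

theorem sum_blocks_factorial_le (s : ℕ) (hs : 1 ≤ s) :
    ∑ τ ∈ setPartitions s, ((Nat.factorial (τ.card - 1)) : ℝ) ≤ (3 / 2) ^ s * (Nat.factorial (s-1)) :=
  sum_blocks_factorial_le_general s
end

section
/- For all real $x$, $\cos^2 x \le \exp\left(-\tfrac{1}{4}\langle x\rangle^2\right)$, where $\langle x\rangle := \min_{k \in \mathbb{Z}} |x - k\pi|$. -/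
/-- The distance from `x` to the nearest integer multiple of `π`. -/
noncomputable def semiabs (x : ℝ) : ℝ := ⨅ k : ℤ, |x - k * Real.pi|

theorem cos_sq_le_exp (x : ℝ) :
    Real.cos x ^ 2 ≤ Real.exp (-(1 / 4) * semiabs x ^ 2) := by
  have hpi := Real.pi_pos
  set k : ℤ := round (x / Real.pi) with hk
  set r : ℝ := x - k * Real.pi with hrdef
  have hr : |r| ≤ Real.pi / 2 := by
    have h := abs_sub_round (x / Real.pi)
    have : |x / Real.pi - k| * Real.pi ≤ 1 / 2 * Real.pi := by
      exact mul_le_mul_of_nonneg_right h hpi.le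
    calc |r| = |(x / Real.pi - k) * Real.pi| := by
          rw [sub_mul, div_mul_cancel₀ _ hpi.ne']
      _ = |x / Real.pi - k| * Real.pi := by rw [abs_mul, abs_of_pos hpi]
      _ ≤ 1 / 2 * Real.pi := this
      _ = Real.pi / 2 := by ring
  set d : ℝ := semiabs x with hd
  have hd0 : 0 ≤ d := le_ciInf fun i => abs_nonneg _
  have hdle : d ≤ |r| := ciInf_le ⟨0, fun y ⟨i, hi⟩ => hi ▸ abs_nonneg _⟩ k
  have hdle2 : d ≤ Real.pi / 2 := hdle.trans hr
  -- sin x ^ 2 = sin r ^ 2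
  have hsin : Real.sin x ^ 2 = Real.sin r ^ 2 := by
    have : Real.sin r = Real.sin x * Real.cos (k * Real.pi)
        - Real.cos x * Real.sin (k * Real.pi) := Real.sin_sub x (k * Real.pi)
    rw [this, Real.sin_int_mul_pi]
    have hc2 : Real.cos (k * Real.pi) ^ 2 = 1 := by
      have := Real.sin_sq_add_cos_sq (k * Real.pi)
      rw [Real.sin_int_mul_pi] at this
      nlinarith
    ring_nf
    nlinarith [hc2]
  -- |sin r| = sin |r|
  have habs : |Real.sin r| = Real.sin |r| := by
    rcases le_or_gt 0 r with h | h
    · rw [abs_of_nonneg h, abs_of_nonneg (Real.sin_nonneg_of_nonneg_of_le_pi h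
        (by rw [abs_of_nonneg h] at hr; linarith))]
    · have h1 : 0 ≤ Real.sin (-r) := Real.sin_nonneg_of_nonneg_of_le_pi (by linarith)
        (by rw [abs_of_neg h] at hr; linarith)
      rw [Real.sin_neg] at h1
      rw [abs_of_neg h, Real.sin_neg, abs_of_nonpos (by linarith)]
  -- Jordan: sin |r| ≥ 2/π * |r| ≥ d/2
  have hjordan : d / 2 ≤ Real.sin |r| := by
    have h1 : 2 / Real.pi * |r| ≤ Real.sin |r| :=
      Real.mul_le_sin (abs_nonneg r) hr
    have h2 : d / 2 ≤ 2 / Real.pi * |r| := by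
      have hp : (1:ℝ)/2 ≤ 2 / Real.pi := by
        rw [div_le_div_iff₀ (by norm_num) hpi]
        nlinarith [Real.pi_le_four]
      calc d / 2 = 1/2 * d := by ring
        _ ≤ 2 / Real.pi * d := by nlinarith
        _ ≤ 2 / Real.pi * |r| := by
            apply mul_le_mul_of_nonneg_left hdle
            positivity
    linarith
  have hsin2 : d ^ 2 / 4 ≤ Real.sin x ^ 2 := by
    rw [hsin]
    have : (d/2)^2 ≤ Real.sin |r| ^ 2 := by
      apply sq_le_sq' <;> nlinarith
    calc d^2/4 = (d/2)^2 := by ring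
      _ ≤ Real.sin |r| ^ 2 := this
      _ = |Real.sin r| ^ 2 := by rw [habs]
      _ = Real.sin r ^ 2 := sq_abs _
  have hcos : Real.cos x ^ 2 ≤ 1 - d^2/4 := by
    have := Real.sin_sq_add_cos_sq x
    linarith
  have hexp : 1 - d^2/4 ≤ Real.exp (-(1/4) * d^2) := by
    have := Real.add_one_le_exp (-(1/4) * d^2)
    linarith
  linarith
end

section
/- For real $x, y$ with $\langle y\rangle \le \langle x\rangle$, one has $|\cos x| \le |\cos y| \cdot \exp\left(-\tfrac{1}{4\pi}(\langle x\rangle^2 - \langle y\rangle^2)(\pi - \langle x\rangle - \langle y\rangle)\right)$, where $\langle x\rangle := \min_{k\in\mathbb{Z}}|x - k\pi|$. -/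
open Real

lemma semiabs_eq (x : ℝ) : semiabs x = |x - round (x / π) * π| := by
  have hπ : (0:ℝ) < π := Real.pi_pos
  apply le_antisymm
  · exact ciInf_le ⟨0, fun v ⟨k, hk⟩ => hk ▸ abs_nonneg _⟩ (round (x / π))
  · apply le_ciInf
    intro k
    have h1 : |x / π - round (x / π)| ≤ |x / π - k| := round_le (x / π) k
    have e : ∀ z : ℤ, |x - z * π| = |x / π - z| * π := by
      intro z
      have hz : (x / π - z) * π = x - z * π := by field_simp
      rw [← hz, abs_mul, abs_of_pos hπ]
    rw [e, e]
    exact mul_le_mul_of_nonneg_right h1 hπ.le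

lemma semiabs_nonneg (x : ℝ) : 0 ≤ semiabs x := by
  rw [semiabs_eq]; exact abs_nonneg _

lemma semiabs_le (x : ℝ) : semiabs x ≤ π / 2 := by
  have hπ : (0:ℝ) < π := Real.pi_pos
  rw [semiabs_eq]
  have hz : (x / π - round (x / π)) * π = x - round (x / π) * π := by field_simp
  rw [← hz, abs_mul, abs_of_pos hπ]
  have := abs_sub_round (x / π)
  nlinarith

lemma abs_cos_eq (x : ℝ) : |Real.cos x| = Real.cos (semiabs x) := by
  have hπ : (0:ℝ) < π := Real.pi_pos
  set k := round (x / π) with hk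
  have h1 : semiabs x = |x - k * π| := semiabs_eq x
  have hb : |x - k * π| ≤ π / 2 := h1 ▸ semiabs_le x
  have hcos : Real.cos (x - k * π) = (-1 : ℝ) ^ k * Real.cos x := by
    rw [← Real.cos_neg, neg_sub, Real.cos_int_mul_pi_sub]
  have h2 : Real.cos (semiabs x) = Real.cos (x - k * π) := by
    rw [h1, Real.cos_abs]
  have h3 : Real.cos (x - k * π) = |Real.cos (x - k * π)| := by
    rw [abs_of_nonneg]
    apply Real.cos_nonneg_of_mem_Icc
    constructor
    · linarith [neg_abs_le (x - k * π)]
    · linarith [le_abs_self (x - k * π)]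
  rw [h2, h3, hcos, abs_mul]
  rcases Int.even_or_odd k with he | ho
  · rw [he.neg_one_zpow, abs_one, one_mul]
  · rw [Odd.neg_one_zpow ho, abs_neg, abs_one, one_mul]

lemma key_deriv (t : ℝ) : HasDerivAt (fun t : ℝ => Real.cos t * Real.exp (t ^ 2 / 2))
    (-Real.sin t * Real.exp (t ^ 2 / 2) + Real.cos t * (Real.exp (t ^ 2 / 2) * t)) t := by
  have h1 : HasDerivAt (fun t : ℝ => t ^ 2 / 2) t t := by
    have := (hasDerivAt_pow 2 t).div_const 2
    simpa using this
  have h2 : HasDerivAt (fun t : ℝ => Real.exp (t ^ 2 / 2))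
      (Real.exp (t ^ 2 / 2) * t) t := (Real.hasDerivAt_exp _).comp t h1
  exact (Real.hasDerivAt_cos t).mul h2

lemma key_mono : AntitoneOn (fun t : ℝ => Real.cos t * Real.exp (t ^ 2 / 2))
    (Set.Icc 0 (π / 2)) := by
  apply antitoneOn_of_deriv_nonpos (convex_Icc _ _)
  · exact (Real.continuous_cos.mul (Real.continuous_exp.comp (by continuity))).continuousOn
  · intro t _
    exact (key_deriv t).differentiableAt.differentiableWithinAt
  · intro t ht
    rw [interior_Icc] at ht
    rw [(key_deriv t).deriv]
    have hcos : 0 < Real.cos t := Real.cos_pos_of_mem_Ioo ⟨by linarith [ht.1, Real.pi_pos], ht.2⟩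
    have htan : t < Real.tan t := Real.lt_tan ht.1 ht.2
    have hsin : t * Real.cos t < Real.sin t := by
      rw [Real.tan_eq_sin_div_cos, lt_div_iff₀ hcos] at htan
      linarith
    nlinarith [Real.exp_pos (t ^ 2 / 2)]

theorem abs_cos_le_abs_cos_mul_exp (x y : ℝ) (h : semiabs y ≤ semiabs x) :
    |Real.cos x| ≤ |Real.cos y| *
      Real.exp (-(1 / (4 * Real.pi)) * (semiabs x ^ 2 - semiabs y ^ 2) *
        (Real.pi - semiabs x - semiabs y)) := by
  have hπ : (0:ℝ) < π := Real.pi_pos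
  set a := semiabs x with ha
  set b := semiabs y with hb
  have hb0 : 0 ≤ b := semiabs_nonneg y
  have ha0 : 0 ≤ a := semiabs_nonneg x
  have ha2 : a ≤ π / 2 := semiabs_le x
  have hb2 : b ≤ π / 2 := semiabs_le y
  rw [abs_cos_eq, abs_cos_eq, ← ha, ← hb]
  have hmono := key_mono ⟨hb0, hb2⟩ ⟨le_trans hb0 h, ha2⟩ h
  simp only at hmono
  -- step 1: cos a ≤ cos b * exp ((b^2 - a^2)/2)
  have step1 : Real.cos a ≤ Real.cos b * Real.exp ((b ^ 2 - a ^ 2) / 2) := by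
    have := mul_le_mul_of_nonneg_right hmono (Real.exp_nonneg (-(a ^ 2) / 2))
    rw [mul_assoc, mul_assoc, ← Real.exp_add, ← Real.exp_add] at this
    have e1 : a ^ 2 / 2 + -(a ^ 2) / 2 = 0 := by ring
    have e2 : b ^ 2 / 2 + -(a ^ 2) / 2 = (b ^ 2 - a ^ 2) / 2 := by ring
    rw [e1, e2, Real.exp_zero, mul_one] at this
    exact this
  have hab2 : 0 ≤ a ^ 2 - b ^ 2 := by nlinarith
  have step2 : (b ^ 2 - a ^ 2) / 2 ≤ -(1 / (4 * π)) * (a ^ 2 - b ^ 2) * (π - a - b) := by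
    have hdiff : -(1 / (4 * π)) * (a ^ 2 - b ^ 2) * (π - a - b) - (b ^ 2 - a ^ 2) / 2
        = (a ^ 2 - b ^ 2) * (π + a + b) / (4 * π) := by
      field_simp; ring
    have hpos : 0 ≤ (a ^ 2 - b ^ 2) * (π + a + b) / (4 * π) := by
      apply div_nonneg
      · apply mul_nonneg hab2; linarith
      · linarith
    linarith
  calc Real.cos a ≤ Real.cos b * Real.exp ((b ^ 2 - a ^ 2) / 2) := step1
    _ ≤ Real.cos b * Real.exp (-(1 / (4 * π)) * (a ^ 2 - b ^ 2) * (π - a - b)) := by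
        apply mul_le_mul_of_nonneg_left (Real.exp_le_exp.mpr step2)
        exact Real.cos_nonneg_of_mem_Icc ⟨by linarith, by linarith⟩
end

section
/- For integers $p \ge 2$ and $r \ge p$, $\sum_{\substack{b_1,\dots,b_p \ge 1 \\ b_1+\cdots+b_p = r}} \prod_{t=1}^p \frac{1}{b_t^2} \le \frac{(5.3)^{p-1}}{r^2}$. -/
/-!
With `1 / 0 = 0` a tuple with a zero part contributes nothing, so the positivity constraint can be
dropped. Splitting off the first part gives `S (p + 1) r = ∑_{a + b = r} a⁻² S p b`, so by induction
everything reduces to the two-part sum. For `a + b = r` with `a, b ≥ 1`,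
`r² / (a² b²) = (1/a + 1/b)² = 1/a² + 1/b² + 2/(ab)`; the squares sum to at most `2 ζ(2) = π²/3`,
and `∑ 1/(ab) ≤ 1` because `ab ≥ r - 1` for each of its `r - 1` terms. Hence the constant
`2 + π²/3 < 5.3`.
-/

open Finset Real

theorem Finset.Nat.sum_antidiagonalTuple_succ {M : Type*} [AddCommMonoid M] (k n : ℕ)
    (f : (Fin (k + 1) → ℕ) → M) :
    ∑ b ∈ Nat.antidiagonalTuple (k + 1) n, f b =
      ∑ p ∈ antidiagonal n, ∑ c ∈ Nat.antidiagonalTuple k p.2, f (Fin.cons p.1 c) := by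
  rw [Finset.sum_sigma']
  refine Finset.sum_nbij' (fun b => ⟨(b 0, ∑ i, Fin.tail b i), Fin.tail b⟩)
    (fun x => Fin.cons x.1.1 x.2) ?_ ?_ (fun b _ => Fin.cons_self_tail b) ?_ ?_
  · intro b hb
    simp_all [Nat.mem_antidiagonalTuple, Fin.sum_univ_succ, Fin.tail]
  · rintro ⟨⟨a, m⟩, c⟩ h
    simp_all [Nat.mem_antidiagonalTuple, Fin.sum_cons]
  · rintro ⟨⟨a, m⟩, c⟩ h
    simp_all [Nat.mem_antidiagonalTuple]
  · intro b _
    simp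

theorem Finset.Nat.sum_antidiagonalTuple_succ_prod {R : Type*} [CommSemiring R] (k n : ℕ)
    (f : ℕ → R) :
    ∑ b ∈ Nat.antidiagonalTuple (k + 1) n, ∏ t, f (b t) =
      ∑ p ∈ antidiagonal n, f p.1 * ∑ c ∈ Nat.antidiagonalTuple k p.2, ∏ t, f (c t) := by
  simp only [Nat.sum_antidiagonalTuple_succ, Fin.prod_univ_succ, Fin.cons_zero, Fin.cons_succ,
    mul_sum]

theorem Finset.Nat.sum_antidiagonal_add_two {M : Type*} [AddCommMonoid M] (n : ℕ)
    (f : ℕ × ℕ → M) :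
    ∑ p ∈ antidiagonal (n + 2), f p =
      f (0, n + 2) + f (n + 2, 0) + ∑ p ∈ antidiagonal n, f (p.1 + 1, p.2 + 1) := by
  rw [Nat.sum_antidiagonal_succ, Nat.sum_antidiagonal_succ', ← add_assoc]

theorem sum_range_one_div_add_one_sq_le (n : ℕ) :
    ∑ k ∈ range n, 1 / ((k : ℝ) + 1) ^ 2 ≤ π ^ 2 / 6 := by
  calc ∑ k ∈ range n, 1 / ((k : ℝ) + 1) ^ 2
      = ∑ k ∈ range (n + 1), 1 / (k : ℝ) ^ 2 := by simp [sum_range_succ']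
    _ ≤ π ^ 2 / 6 := sum_le_hasSum _ (fun _ _ => by positivity) hasSum_zeta_two

theorem sum_antidiagonal_inv_mul_inv_le_one (n : ℕ) :
    ∑ p ∈ antidiagonal n, 1 / ((p.1 : ℝ) + 1) * (1 / ((p.2 : ℝ) + 1)) ≤ 1 := by
  calc ∑ p ∈ antidiagonal n, 1 / ((p.1 : ℝ) + 1) * (1 / ((p.2 : ℝ) + 1))
      ≤ ∑ _p ∈ antidiagonal n, 1 / ((n : ℝ) + 1) := by
        refine sum_le_sum fun p hp => ?_
        have hn : (p.1 : ℝ) + p.2 = n := by exact_mod_cast mem_antidiagonal.mp hp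
        rw [one_div_mul_one_div]
        gcongr
        nlinarith [p.1.cast_nonneg (α := ℝ), p.2.cast_nonneg (α := ℝ)]
    _ = 1 := by
      rw [sum_const, Nat.card_antidiagonal, nsmul_eq_mul]
      push_cast
      field_simp

theorem sum_antidiagonal_inv_sq_mul_inv_sq_le (r : ℕ) :
    ∑ p ∈ antidiagonal r, 1 / (p.1 : ℝ) ^ 2 * (1 / (p.2 : ℝ) ^ 2) ≤ (2 + π ^ 2 / 3) / r ^ 2 := by
  obtain _ | _ | n := r
  · simp
  · simp [Nat.sum_antidiagonal_succ]; positivity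
  have hterm : ∀ p ∈ antidiagonal n,
      1 / ((p.1 + 1 : ℕ) : ℝ) ^ 2 * (1 / ((p.2 + 1 : ℕ) : ℝ) ^ 2) =
        ((1 / ((p.1 : ℝ) + 1)) ^ 2 + (1 / ((p.2 : ℝ) + 1)) ^ 2 +
          2 * (1 / ((p.1 : ℝ) + 1) * (1 / ((p.2 : ℝ) + 1)))) / ((n + 2 : ℕ) : ℝ) ^ 2 := by
    intro p hp
    have hn : (n : ℝ) = p.1 + p.2 := by exact_mod_cast (mem_antidiagonal.mp hp).symm
    push_cast
    rw [hn]
    field_simp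
    ring
  have hswap : ∑ p ∈ antidiagonal n, (1 / ((p.2 : ℝ) + 1)) ^ 2 =
      ∑ p ∈ antidiagonal n, (1 / ((p.1 : ℝ) + 1)) ^ 2 :=
    Nat.sum_antidiagonal_swap (f := fun p => (1 / ((p.1 : ℝ) + 1)) ^ 2)
  have hbasel : ∑ p ∈ antidiagonal n, (1 / ((p.1 : ℝ) + 1)) ^ 2 ≤ π ^ 2 / 6 := by
    rw [Nat.sum_antidiagonal_eq_sum_range_succ_mk]
    simpa using sum_range_one_div_add_one_sq_le (n + 1)
  rw [Nat.sum_antidiagonal_add_two]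
  simp only [Nat.cast_zero, ne_eq, OfNat.ofNat_ne_zero, not_false_eq_true, zero_pow, div_zero,
    zero_mul, mul_zero, zero_add]
  rw [sum_congr rfl hterm, ← sum_div, sum_add_distrib, sum_add_distrib, ← mul_sum, hswap]
  gcongr ?_ / _
  linarith [sum_antidiagonal_inv_mul_inv_le_one n]

theorem sum_antidiagonalTuple_prod_inv_sq_le (p r : ℕ) :
    ∑ b ∈ Nat.antidiagonalTuple (p + 1) r, ∏ t, (1 : ℝ) / (b t) ^ 2
      ≤ (2 + π ^ 2 / 3) ^ p / r ^ 2 := by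
  induction p generalizing r with
  | zero => simp
  | succ p ih =>
    set C := 2 + π ^ 2 / 3
    rw [Nat.sum_antidiagonalTuple_succ_prod (f := fun n : ℕ => 1 / (n : ℝ) ^ 2)]
    calc ∑ x ∈ antidiagonal r,
          1 / (x.1 : ℝ) ^ 2 * ∑ c ∈ Nat.antidiagonalTuple (p + 1) x.2, ∏ t, 1 / (c t : ℝ) ^ 2
        ≤ ∑ x ∈ antidiagonal r, 1 / (x.1 : ℝ) ^ 2 * (C ^ p / x.2 ^ 2) := by
          gcongr with x; exact ih x.2
      _ = C ^ p * ∑ x ∈ antidiagonal r, 1 / (x.1 : ℝ) ^ 2 * (1 / x.2 ^ 2) := by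
          rw [mul_sum]; congr! 1 with x; ring
      _ ≤ C ^ p * (C / r ^ 2) := by gcongr; exact sum_antidiagonal_inv_sq_mul_inv_sq_le r
      _ = C ^ (p + 1) / r ^ 2 := by ring

theorem sum_compositions_prod_inv_sq_le_general (p r : ℕ) (hp : 2 ≤ p) :
    ∑ b ∈ (Finset.Nat.antidiagonalTuple p r).filter (fun b => ∀ t, 1 ≤ b t),
      ∏ t, (1 : ℝ) / (b t) ^ 2 ≤ (5.3 : ℝ) ^ (p - 1) / r ^ 2 := by
  obtain ⟨q, rfl⟩ : ∃ q, p = q + 1 := ⟨p - 1, by omega⟩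
  have hC : 2 + π ^ 2 / 3 ≤ (5.3 : ℝ) := by nlinarith [pi_lt_d4, pi_pos]
  calc ∑ b ∈ (Nat.antidiagonalTuple (q + 1) r).filter (fun b => ∀ t, 1 ≤ b t),
        ∏ t, (1 : ℝ) / (b t) ^ 2
      ≤ ∑ b ∈ Nat.antidiagonalTuple (q + 1) r, ∏ t, (1 : ℝ) / (b t) ^ 2 :=
        sum_le_sum_of_subset_of_nonneg (filter_subset _ _) fun _ _ _ => by positivity
    _ ≤ (2 + π ^ 2 / 3) ^ q / r ^ 2 := sum_antidiagonalTuple_prod_inv_sq_le q r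
    _ ≤ (5.3 : ℝ) ^ (q + 1 - 1) / r ^ 2 := by
      rw [Nat.add_sub_cancel]; gcongr

theorem sum_compositions_prod_inv_sq_le (p r : ℕ) (hp : 2 ≤ p) (hr : p ≤ r) :
    ∑ b ∈ (Finset.Nat.antidiagonalTuple p r).filter (fun b => ∀ t, 1 ≤ b t),
      ∏ t, (1 : ℝ) / (b t) ^ 2 ≤ (5.3 : ℝ) ^ (p - 1) / r ^ 2 :=
  sum_compositions_prod_inv_sq_le_general p r hp
end

section
/- Let $t$ and $q$ satisfy $0 < t < \pi/3$ and $q \le n/5$. Let $X = \{x_1,\dots,x_n\}$ be a multiset of $n$ points of $\mathbb{R}/\pi$ such that no arc of length $3t$ contains $n - q$ or more elements of $X$. Then there exist $x \in \mathbb{R}/\pi$ and $\rho < \pi/3$ such that both the arc $I(x,\rho)$ and the complement of the arc $I(x, \rho + t)$ each contain at least $q$ elements of $X$. -/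
/-! If some arc of length `t/2` holds `q` points, take it: its `t`-thickening lies in an arc of
length `3t`, which holds fewer than `n - q` points, so at least `q` points lie outside.
Otherwise every arc of length `t/2` holds fewer than `q` points. One of the three arcs
`[kπ/3, (k+1)π/3)` holds at least `q` points; from its left end `lo`, let `e` be the position
of the `q`-th of them. Then `[lo, e]` holds at least `q` points, while its thickening
`[lo - t/2, e + t/2]` is covered by `[lo - t/2, lo)`, the fewer than `q` points of `[lo, e)` and
`[e, e + t/2]`, so it holds at most `3(q - 1)` points and at least `n - 3(q - 1) ≥ q` lie
outside. -/

open scoped Real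
open Finset Metric

namespace Finset

variable {ι : Type*}

lemma le_card_filter_not_of_card_filter_add_le [Fintype ι] {P : ι → Prop} [DecidablePred P]
    {q : ℕ} (h : #{i | P i} + q ≤ Fintype.card ι) : q ≤ #{i | ¬P i} := by
  have := card_filter_add_card_filter_not (s := univ) fun i => P i
  rw [card_univ] at this
  omega

lemma exists_kth_smallest {α : Type*} [LinearOrder α] (s : Finset ι) (g : ι → α) {k : ℕ}
    (hk : 0 < k) (hks : k ≤ #s) :
    ∃ j ∈ s, k ≤ #{i ∈ s | g i ≤ g j} ∧ #{i ∈ s | g i < g j} < k := by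
  classical
  have hs : s.Nonempty := card_pos.1 (hk.trans_le hks)
  obtain ⟨jmax, hjmax, hmax⟩ := s.exists_max_image g hs
  have hE : {j ∈ s | k ≤ #{i ∈ s | g i ≤ g j}}.Nonempty :=
    ⟨jmax, mem_filter.2 ⟨hjmax, by rwa [filter_true_of_mem hmax]⟩⟩
  obtain ⟨j, hjE, hmin⟩ := exists_min_image _ g hE
  obtain ⟨hjs, hkj⟩ := mem_filter.1 hjE
  refine ⟨j, hjs, hkj, not_le.1 fun hkB => ?_⟩
  obtain ⟨l, hlB, hlmax⟩ := exists_max_image _ g (card_pos.1 (hk.trans_le hkB))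
  obtain ⟨hls, hlj⟩ := mem_filter.1 hlB
  have hlE : l ∈ {j ∈ s | k ≤ #{i ∈ s | g i ≤ g j}} :=
    mem_filter.2 ⟨hls, hkB.trans (card_le_card fun i hi =>
      mem_filter.2 ⟨(mem_filter.1 hi).1, hlmax i hi⟩)⟩
  exact (hmin l hlE).not_gt hlj

lemma exists_le_card_filter_mem_Ico [Fintype ι] (f : ι → ℝ) {L : ℝ} (hL : 0 < L) {m q : ℕ}
    (hf : ∀ i, f i ∈ Set.Ico 0 (m * L)) (h : m * (q - 1) < Fintype.card ι) :
    ∃ k < m, q ≤ #{i | f i ∈ Set.Ico (k * L) (k * L + L)} := by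
  have hmaps : ∀ i ∈ (univ : Finset ι), ⌊f i / L⌋₊ ∈ range m := fun i _ => by
    rw [mem_range, Nat.floor_lt (div_nonneg (hf i).1 hL.le), div_lt_iff₀ hL]
    exact (hf i).2
  obtain ⟨k, hk, hcard⟩ := exists_lt_card_fiber_of_mul_lt_card_of_maps_to hmaps
    (by rwa [card_range, card_univ])
  refine ⟨k, mem_range.1 hk, ?_⟩
  have hfiber : ∀ i, ⌊f i / L⌋₊ = k ↔ f i ∈ Set.Ico (k * L) (k * L + L) := fun i => by
    rw [Nat.floor_eq_iff (div_nonneg (hf i).1 hL.le), le_div_iff₀ hL, div_lt_iff₀ hL,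
      add_one_mul, Set.mem_Ico]
  simp only [hfiber] at hcard
  omega

end Finset

namespace AddCircle

variable {p : ℝ}

lemma image_coe_closedBall (v r : ℝ) :
    ((↑) : ℝ → AddCircle p) '' closedBall v r = closedBall (v : AddCircle p) r := by
  ext y
  constructor
  · rintro ⟨u, hu, rfl⟩
    rw [mem_closedBall, dist_eq_norm, ← coe_sub]
    exact QuotientAddGroup.norm_mk_le_norm.trans hu
  · intro hy
    obtain ⟨u, rfl⟩ := QuotientAddGroup.mk_surjective y
    have hu : u ∈ ((↑) : ℝ → AddCircle p) ⁻¹' closedBall (v : AddCircle p) r := hy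
    rw [coe_real_preimage_closedBall_eq_iUnion, Set.mem_iUnion] at hu
    obtain ⟨z, hz⟩ := hu
    refine ⟨u - z • p, ?_, by simp [coe_period]⟩
    rw [mem_closedBall, Real.dist_eq] at hz ⊢
    rwa [sub_sub, add_comm]

lemma coe_mem_closedBall_of_mem_Icc {u c r : ℝ} (hu : u ∈ Set.Icc (c - r) (c + r)) :
    (u : AddCircle p) ∈ closedBall (c : AddCircle p) r := by
  rw [← image_coe_closedBall, Real.closedBall_eq_Icc]
  exact Set.mem_image_of_mem _ hu

lemma closedBall_coe_midpoint_subset (a b t : ℝ) :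
    closedBall (((a + b) / 2 : ℝ) : AddCircle p) ((b - a + t) / 2) ⊆
      closedBall ((a - t / 4 : ℝ) : AddCircle p) (t / 4) ∪ (↑) '' Set.Ico a b ∪
        closedBall ((b + t / 4 : ℝ) : AddCircle p) (t / 4) := by
  rw [← image_coe_closedBall, Real.closedBall_eq_Icc]
  rintro _ ⟨w, ⟨hw₁, hw₂⟩, rfl⟩
  rcases lt_or_ge w a with hwa | hwa
  · exact Or.inl (Or.inl (coe_mem_closedBall_of_mem_Icc ⟨by linarith, by linarith⟩))
  rcases lt_or_ge w b with hwb | hwb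
  · exact Or.inl (Or.inr (Set.mem_image_of_mem _ ⟨hwa, hwb⟩))
  · exact Or.inr (coe_mem_closedBall_of_mem_Icc ⟨by linarith, by linarith⟩)

lemma injOn_coe_Ico [Fact (0 < p)] : Set.InjOn ((↑) : ℝ → AddCircle p) (Set.Ico 0 p) :=
  fun u hu w hw h =>
    (coe_eq_coe_iff_of_mem_Ico (a := 0) (by simpa using hu) (by simpa using hw)).1 h

open Classical in
lemma card_coe_mem_closedBall_midpoint_le [Fact (0 < p)] {ι : Type*} [Fintype ι] (f : ι → ℝ)
    (hf : ∀ i, f i ∈ Set.Ico 0 p) {a b : ℝ} (ha : 0 ≤ a) (hb : b ≤ p) (t : ℝ) :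
    #{i | (f i : AddCircle p) ∈ closedBall (((a + b) / 2 : ℝ) : AddCircle p) ((b - a + t) / 2)}
      ≤ #{i | (f i : AddCircle p) ∈ closedBall ((a - t / 4 : ℝ) : AddCircle p) (t / 4)} +
        #{i | f i ∈ Set.Ico a b} +
        #{i | (f i : AddCircle p) ∈ closedBall ((b + t / 4 : ℝ) : AddCircle p) (t / 4)} := by
  refine (card_le_card fun i hi => ?_).trans
    ((card_union_le _ _).trans (Nat.add_le_add_right (card_union_le _ _) _))
  simp only [mem_filter, mem_univ, true_and, mem_union] at hi ⊢
  rcases closedBall_coe_midpoint_subset a b t hi with (h | h) | h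
  · exact Or.inl (Or.inl h)
  · exact Or.inl (Or.inr (injOn_coe_Ico.mem_of_mem_image (Set.Ico_subset_Ico ha hb) (hf i) h))
  · exact Or.inr h

open Classical in
theorem exists_separator_of_forall_card_closedBall_lt [Fact (0 < p)] {ι : Type*} [Fintype ι]
    (x : ι → AddCircle p) {t : ℝ} {m q : ℕ} (hm : 0 < m)
    (hsparse : ∀ c, #{i | x i ∈ closedBall c (t / 4)} < q)
    (hwin : m * (q - 1) < Fintype.card ι) (hq : 3 * (q - 1) + q ≤ Fintype.card ι) :
    ∃ (c : AddCircle p) (ρ : ℝ), 0 ≤ ρ ∧ ρ < p / m ∧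
      q ≤ #{i | x i ∈ closedBall c (ρ / 2)} ∧
      q ≤ #{i | x i ∉ closedBall c ((ρ + t) / 2)} := by
  choose f hf hfx using fun i => eq_coe_Ico (x i)
  obtain rfl : (fun i => (f i : AddCircle p)) = x := funext hfx
  have hq0 : 0 < q := (Nat.zero_le _).trans_lt (hsparse 0)
  have hL : 0 < p / m := div_pos Fact.out (Nat.cast_pos.2 hm)
  obtain ⟨k, -, hk⟩ := exists_le_card_filter_mem_Ico f hL
    (by rwa [mul_div_cancel₀ _ (Nat.cast_ne_zero.2 hm.ne')]) hwin
  set lo := k * (p / m)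
  set T : Finset ι := {i | f i ∈ Set.Ico lo (lo + p / m)}
  obtain ⟨j, hjT, hle, hlt⟩ := exists_kth_smallest T f hq0 hk
  set e := f j
  obtain ⟨hloe, helo⟩ : lo ≤ e ∧ e < lo + p / m := by simpa [T] using hjT
  have hlo : 0 ≤ lo := by positivity
  refine ⟨((lo + e) / 2 : ℝ), e - lo, by linarith, by linarith, ?_, ?_⟩
  · refine hle.trans (card_le_card fun i hi => ?_)
    simp only [mem_filter, mem_univ, true_and, Set.mem_Ico, T] at hi ⊢
    exact coe_mem_closedBall_of_mem_Icc ⟨by linarith, by linarith⟩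
  · have hmid : #{i | f i ∈ Set.Ico lo e} ≤ #{i ∈ T | f i < e} :=
      card_le_card fun i hi => by
        simp only [mem_filter, mem_univ, true_and, Set.mem_Ico, T] at hi ⊢
        exact ⟨⟨hi.1, by linarith⟩, hi.2⟩
    refine le_card_filter_not_of_card_filter_add_le (le_trans (Nat.add_le_add_right ?_ q) hq)
    calc _ ≤ _ := card_coe_mem_closedBall_midpoint_le f hf hlo (hf j).2.le t
      _ ≤ (q - 1) + (q - 1) + (q - 1) :=
        add_le_add (add_le_add (Nat.le_sub_one_of_lt (hsparse _))
          (hmid.trans (Nat.le_sub_one_of_lt hlt))) (Nat.le_sub_one_of_lt (hsparse _))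
      _ = 3 * (q - 1) := by ring

end AddCircle

/-- Separation lemma on the circle `ℝ/π`: if no arc of length `3t` contains
`n - q` or more of the points, there is an arc `I(x,ρ)` with `ρ < π/3` such that
both `I(x,ρ)` and the complement of `I(x,ρ+t)` contain at least `q` points. -/
theorem circle_separator (n q : ℕ) (t : ℝ) (ht0 : 0 < t) (ht : t < π / 3)
    (hq : (q : ℝ) ≤ n / 5) (x : Fin n → AddCircle π)
    (hno : ∀ c : AddCircle π,
      Nat.card {i : Fin n // x i ∈ Metric.closedBall c (3 * t / 2)} < n - q) :
    ∃ (c : AddCircle π) (ρ : ℝ), 0 ≤ ρ ∧ ρ < π / 3 ∧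
      q ≤ Nat.card {i : Fin n // x i ∈ Metric.closedBall c (ρ / 2)} ∧
      q ≤ Nat.card {i : Fin n // x i ∉ Metric.closedBall c ((ρ + t) / 2)} := by
  classical
  simp only [Nat.card_eq_fintype_card, Fintype.card_subtype] at hno ⊢
  have : Fact (0 < π) := ⟨Real.pi_pos⟩
  have h5q : 5 * q ≤ n := by exact_mod_cast (by linarith : (5 * q : ℝ) ≤ n)
  by_cases hdense : ∃ c, q ≤ #{i | x i ∈ closedBall c (t / 4)}
  · obtain ⟨c, hc⟩ := hdense
    refine ⟨c, t / 2, by positivity, by linarith, by rwa [show t / 2 / 2 = t / 4 by ring], ?_⟩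
    refine le_card_filter_not_of_card_filter_add_le (le_trans ?_ (Fintype.card_fin n).ge)
    have hsub : #{i | x i ∈ closedBall c ((t / 2 + t) / 2)} ≤
        #{i | x i ∈ closedBall c (3 * t / 2)} :=
      card_le_card (monotone_filter_right _ fun i _ =>
        closedBall_subset_closedBall (x := c) (by linarith) (a := x i))
    have := hno c
    omega
  · push Not at hdense
    obtain ⟨c, ρ, hρ0, hρ, hin, hout⟩ :=
      AddCircle.exists_separator_of_forall_card_closedBall_lt (m := 3) x (by norm_num) hdense
        (by have := hdense 0; simp only [Fintype.card_fin]; omega)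
        (by simp only [Fintype.card_fin]; omega)
    exact ⟨c, ρ, hρ0, by exact_mod_cast hρ, hin, hout⟩
end

section
/- Let $G$ be a graph on $[n]$ with maximum degree $d$ and Cheeger constant $h(G) \ge \gamma d$ for some $\gamma > 0$. Let $U_1, U_2$ be disjoint vertex sets. Then there exist at least $\gamma d \cdot \frac{\min\{|U_1|,|U_2|\}}{2\ell(U_1,U_2)}$ pairwise edge-disjoint paths in $G$, each with one end in $U_1$ and the other in $U_2$, of length at most $\ell(U_1,U_2) := 2 + 2\log_{1+\gamma/2}\left(\frac{n}{\min\{|U_1|,|U_2|\} + \gamma d/2}\right)$. -/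
/-!
Greedy selection. Suppose fewer than `γ d m / (2ℓ)` paths of length `≤ ℓ` have been chosen,
`m = min |U₁| |U₂|`; their edges form a set `F` with `|F| < γ d m / 2`. In `G \ F` grow the balls
`B_r` around `U₁` and around `U₂`. While `|B_r| ≤ n / 2`, the Cheeger bound gives `γ d |B_r|`
boundary edges in `G`, at most `γ d |B_r| / 2` of which lie in `F`, and every newly reached
vertex absorbs at most `min d |B_r|` of the surviving ones. Hence `|B_1| ≥ m + γ d / 2` and
`|B_{r+1}| ≥ (1 + γ/2) |B_r|`, so both balls exceed `n / 2` within radius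
`1 + log_{1+γ/2} (n / (m + γ d / 2)) = ℓ / 2`. They meet, which yields a `U₁`–`U₂` path of
length `≤ ℓ` avoiding `F`.
-/

open Finset Real Function

/-- Edge boundary size `|∂_G U|`: the number of edges with exactly one end in `U`. -/
def edgeBoundaryCard {n : ℕ} (G : SimpleGraph (Fin n)) [DecidableRel G.Adj]
    (U : Finset (Fin n)) : ℕ :=
  ((Finset.univ ×ˢ Finset.univ).filter
    fun p : Fin n × Fin n => G.Adj p.1 p.2 ∧ p.1 ∈ U ∧ p.2 ∉ U).card

lemma Fin.pairwise_snoc {α : Type*} {r : α → α → Prop} (hr : ∀ x y, r x y → r y x) {k : ℕ}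
    {f : Fin k → α} {a : α} (hf : Pairwise (r on f)) (ha : ∀ i, r (f i) a) :
    Pairwise (r on (Fin.snoc f a : Fin (k + 1) → α)) := by
  intro i j hij
  induction i using Fin.lastCases <;> induction j using Fin.lastCases <;>
    simp_all [onFun, Fin.castSucc_inj, hf _]

lemma pow_mul_le_of_growth {a : ℕ → ℝ} {q c t : ℝ} (hq : 0 ≤ q)
    (hfirst : a 0 ≤ t → c ≤ a 1) (hstep : ∀ i, a i ≤ t → q * a i ≤ a (i + 1)) :
    ∀ j, (∀ i ≤ j, a i ≤ t) → q ^ j * c ≤ a (j + 1)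
  | 0, h => by simpa using hfirst (h 0 le_rfl)
  | j + 1, h => calc
      q ^ (j + 1) * c = q * (q ^ j * c) := by ring
      _ ≤ q * a (j + 1) := by
        gcongr
        exact pow_mul_le_of_growth hq hfirst hstep j fun i hi => h i (by omega)
      _ ≤ a (j + 2) := hstep _ (h _ le_rfl)

lemma exists_le_one_add_logb_of_growth {a : ℕ → ℝ} {q c N : ℝ} (hq : 1 < q) (hq2 : q ≤ 2)
    (hc : 0 < c) (hcN : c ≤ N) (hfirst : a 0 ≤ N / 2 → c ≤ a 1)
    (hstep : ∀ i, a i ≤ N / 2 → q * a i ≤ a (i + 1)) :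
    ∃ r : ℕ, N / 2 < a r ∧ (r : ℝ) ≤ 1 + logb q (N / c) := by
  have hgrow := pow_mul_le_of_growth (zero_lt_one.trans hq).le hfirst hstep
  have hex : ∃ r, N / 2 < a r := by
    by_contra! h
    obtain ⟨j, hj⟩ := pow_unbounded_of_one_lt (N / 2 / c) hq
    rw [div_lt_iff₀ hc] at hj
    linarith [hgrow j fun i _ => h i, h (j + 1)]
  refine ⟨Nat.find hex, Nat.find_spec hex, ?_⟩
  have hbefore : ∀ i < Nat.find hex, a i ≤ N / 2 := fun i hi => not_lt.1 (Nat.find_min hex hi)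
  have hlog : 0 ≤ logb q (N / c) := logb_nonneg hq ((one_le_div hc).2 hcN)
  obtain hr | ⟨s, hs⟩ : Nat.find hex ≤ 1 ∨ ∃ s, Nat.find hex = s + 2 :=
    (le_or_gt _ 1).imp_right fun h => ⟨_, (Nat.sub_add_cancel h).symm⟩
  · have : (Nat.find hex : ℝ) ≤ 1 := by exact_mod_cast hr
    linarith
  · have hs' : q ^ s * c ≤ N / 2 :=
      (hgrow s fun i hi => hbefore i (by omega)).trans (hbefore (s + 1) (by omega))
    -- `q ≤ 2` trades the factor `1/2` for one more step of growth
    have : ((s + 1 : ℕ) : ℝ) ≤ logb q (N / c) := by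
      rw [le_logb_iff_rpow_le hq (div_pos (hc.trans_le hcN) hc), rpow_natCast, le_div_iff₀ hc,
        pow_succ]
      nlinarith [pow_pos (zero_lt_one.trans hq) s]
    rw [hs]
    push_cast at this ⊢
    linarith

namespace SimpleGraph

variable {V : Type*}

lemma exists_pairwise_edgeDisjoint_walks [DecidableEq V] {G : SimpleGraph V}
    (good : (Σ (u : V) (v : V), G.Walk u v) → Prop) {L β : ℝ} {k : ℕ}
    (hlen : ∀ p, good p → (p.2.2.length : ℝ) ≤ L) (hk : ∀ j < k, (j : ℝ) * L < β)
    (havoid : ∀ F : Finset (Sym2 V), (#F : ℝ) < β → ∃ p, good p ∧ ∀ e ∈ p.2.2.edges, e ∉ F) :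
    ∃ P : Fin k → Σ (u : V) (v : V), G.Walk u v, (∀ i, good (P i)) ∧
      Pairwise fun i j => List.Disjoint (P i).2.2.edges (P j).2.2.edges := by
  induction k with
  | zero => exact ⟨Fin.elim0, fun i => i.elim0, fun i => i.elim0⟩
  | succ k ih =>
    obtain ⟨P, hgood, hdisj⟩ := ih fun j hj => hk j (by omega)
    let F := univ.biUnion fun i => (P i).2.2.edges.toFinset
    have hF : (#F : ℝ) < β := calc
      (#F : ℝ) ≤ ∑ i, ((P i).2.2.length : ℝ) := by
        exact_mod_cast card_biUnion_le.trans <| sum_le_sum fun i _ =>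
          (List.toFinset_card_le _).trans (Walk.length_edges _).le
      _ ≤ ∑ _i : Fin k, L := sum_le_sum fun i _ => hlen _ (hgood i)
      _ = k * L := by simp
      _ < β := hk k (by omega)
    obtain ⟨p, hp, hpF⟩ := havoid F hF
    refine ⟨Fin.snoc P p, Fin.lastCases (by simpa using hp) fun i => by simpa using hgood i,
      Fin.pairwise_snoc (r := fun p q : Σ (u : V) (v : V), G.Walk u v =>
        List.Disjoint p.2.2.edges q.2.2.edges) (fun _ _ h => h.symm) hdisj
        fun i e hi hp => hpF e hp ?_⟩
    exact mem_biUnion.2 ⟨i, mem_univ _, List.mem_toFinset.2 hi⟩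

variable [Fintype V] (H : SimpleGraph V) [DecidableRel H.Adj]

lemma card_filter_adj_le_maxDegree (S : Finset V) (v : V) :
    #{u ∈ S | H.Adj u v} ≤ H.maxDegree := by
  refine (card_le_card fun u hu => ?_).trans ((card_neighborFinset_eq_degree H v).trans_le
    (H.degree_le_maxDegree v))
  exact (mem_neighborFinset H v u).2 (mem_filter.1 hu).2.symm

variable [DecidableEq V]

def vertexBoundary (S : Finset V) : Finset V :=
  {v | v ∉ S ∧ ∃ u ∈ S, H.Adj u v}

@[simp] lemma mem_vertexBoundary {S : Finset V} {v : V} :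
    v ∈ H.vertexBoundary S ↔ v ∉ S ∧ ∃ u ∈ S, H.Adj u v := by
  simp [vertexBoundary]

def setBall (U : Finset V) : ℕ → Finset V
  | 0 => U
  | r + 1 => setBall U r ∪ H.vertexBoundary (setBall U r)

variable (U : Finset V)

lemma card_setBall_succ (r : ℕ) :
    #(H.setBall U (r + 1)) = #(H.setBall U r) + #(H.vertexBoundary (H.setBall U r)) :=
  card_union_of_disjoint <| Finset.disjoint_left.2 fun _ hv hv' =>
    ((mem_vertexBoundary H).1 hv').1 hv

lemma subset_setBall : ∀ r, U ⊆ H.setBall U r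
  | 0 => subset_rfl
  | r + 1 => (subset_setBall r).trans subset_union_left

lemma exists_walk_of_mem_setBall {v : V} :
    ∀ {r}, v ∈ H.setBall U r → ∃ u ∈ U, ∃ p : H.Walk u v, p.length ≤ r
  | 0, hv => ⟨v, hv, .nil, le_rfl⟩
  | r + 1, hv => by
    rcases mem_union.1 hv with hv | hv
    · obtain ⟨u, hu, p, hp⟩ := exists_walk_of_mem_setBall hv
      exact ⟨u, hu, p, hp.trans r.le_succ⟩
    · obtain ⟨-, w, hw, hwv⟩ := (mem_vertexBoundary H).1 hv
      obtain ⟨u, hu, p, hp⟩ := exists_walk_of_mem_setBall hw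
      exact ⟨u, hu, p.concat hwv, by rw [Walk.length_concat]; omega⟩

end SimpleGraph

open SimpleGraph

section Cheeger

variable {n : ℕ}

lemma edgeBoundaryCard_le_mul_card_vertexBoundary (H : SimpleGraph (Fin n))
    [DecidableRel H.Adj] (S : Finset (Fin n)) (w : ℕ)
    (hw : ∀ v ∉ S, #{u ∈ S | H.Adj u v} ≤ w) :
    edgeBoundaryCard H S ≤ w * #(H.vertexBoundary S) := by
  refine card_le_mul_card_image_of_maps_to (f := Prod.snd) ?_ w ?_
  · rintro ⟨u, v⟩ h
    simp only [mem_filter, mem_product, mem_univ, true_and] at h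
    exact (mem_vertexBoundary H).2 ⟨h.2.2, u, h.2.1, h.1⟩
  · intro v hv
    refine le_trans ?_ (hw v ((mem_vertexBoundary H).1 hv).1)
    refine card_le_card_of_injOn Prod.fst ?_ ?_
    · rintro ⟨u, v'⟩ h
      simp only [mem_coe, mem_filter, mem_product, mem_univ, true_and] at h ⊢
      exact ⟨h.1.2.1, h.2 ▸ h.1.1⟩
    · rintro ⟨u, v₁⟩ h₁ ⟨u', v₂⟩ h₂ (rfl : u = u')
      simp only [mem_coe, mem_filter, mem_product, mem_univ, true_and] at h₁ h₂
      rw [h₁.2, h₂.2]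

lemma edgeBoundaryCard_le_deleteEdges_add (G : SimpleGraph (Fin n)) [DecidableRel G.Adj]
    (F : Finset (Sym2 (Fin n))) (S : Finset (Fin n)) :
    edgeBoundaryCard G S ≤ edgeBoundaryCard (G.deleteEdges F) S + #F := by
  let crossing : Finset (Fin n × Fin n) := {p | G.Adj p.1 p.2 ∧ p.1 ∈ S ∧ p.2 ∉ S}
  have hF : #{p ∈ crossing | s(p.1, p.2) ∈ F} ≤ #F := by
    refine card_le_card_of_injOn (fun p => s(p.1, p.2)) (fun p hp => (mem_filter.1 hp).2) ?_
    rintro ⟨u, v⟩ hp ⟨u', v'⟩ hp' huv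
    simp only [crossing, coe_filter, mem_filter, mem_univ, true_and, Set.mem_ofPred_eq] at hp hp'
    rcases Sym2.eq_iff.1 huv with ⟨rfl, rfl⟩ | ⟨rfl, rfl⟩
    · rfl
    · exact absurd hp.1.2.1 hp'.1.2.2
  calc edgeBoundaryCard G S
      = #{p ∈ crossing | s(p.1, p.2) ∉ F} + #{p ∈ crossing | s(p.1, p.2) ∈ F} := by
        rw [add_comm, card_filter_add_card_filter_not]; rfl
    _ ≤ edgeBoundaryCard (G.deleteEdges F) S + #F := by
        refine add_le_add (card_le_card fun p hp => ?_) hF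
        simp only [crossing, mem_filter, mem_univ, true_and, mem_product, deleteEdges_adj,
          mem_coe] at hp ⊢
        tauto

lemma edgeBoundaryCard_singleton_le_degree (G : SimpleGraph (Fin n)) [DecidableRel G.Adj]
    (u : Fin n) : edgeBoundaryCard G {u} ≤ G.degree u := by
  rw [← card_neighborFinset_eq_degree]
  refine card_le_card_of_injOn Prod.snd ?_ ?_
  · rintro ⟨u', v⟩ h
    simp only [mem_coe, mem_filter, mem_product, mem_univ, true_and, mem_singleton] at h
    simpa [h.2.1] using h.1
  · rintro ⟨u₁, v⟩ h₁ ⟨u₂, v'⟩ h₂ (rfl : v = v')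
    simp only [mem_coe, mem_filter, mem_product, mem_univ, true_and, mem_singleton] at h₁ h₂
    rw [h₁.2.1, h₂.2.1]

def CheegerAtLeast (G : SimpleGraph (Fin n)) [DecidableRel G.Adj] (h : ℝ) : Prop :=
  ∀ U : Finset (Fin n), 1 ≤ #U → (#U : ℝ) ≤ n / 2 → h * #U ≤ edgeBoundaryCard G U

variable {G : SimpleGraph (Fin n)} [DecidableRel G.Adj] {d : ℕ} {γ : ℝ}

lemma le_one_of_cheegerAtLeast (hd : G.maxDegree = d) (hd0 : 0 < d) (hn : 2 ≤ n)
    (hG : CheegerAtLeast G (γ * d)) : γ ≤ 1 := by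
  let u : Fin n := ⟨0, by omega⟩
  have hu := hG {u} (by simp) (by
    rw [card_singleton, Nat.cast_one, le_div_iff₀ two_pos, one_mul]; exact_mod_cast hn)
  have hdeg : (edgeBoundaryCard G {u} : ℝ) ≤ d := by
    exact_mod_cast (edgeBoundaryCard_singleton_le_degree G u).trans
      (hd ▸ G.degree_le_maxDegree u)
  rw [card_singleton, Nat.cast_one, mul_one] at hu
  have : (0 : ℝ) < d := by exact_mod_cast hd0
  nlinarith

lemma card_vertexBoundary_deleteEdges_gt (hd : G.maxDegree = d) (hG : CheegerAtLeast G (γ * d))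
    {F : Finset (Sym2 (Fin n))} {S : Finset (Fin n)} (hS : (#S : ℝ) ≤ n / 2)
    (hF : (#F : ℝ) < γ * d * #S / 2) :
    γ * #S / 2 < #((G.deleteEdges F).vertexBoundary S) ∧
      γ * d / 2 < #((G.deleteEdges F).vertexBoundary S) := by
  have hS1 : 1 ≤ #S := Nat.one_le_iff_ne_zero.2 fun h =>
    (Nat.cast_nonneg (α := ℝ) #F).not_gt (by simpa [h] using hF)
  have hd0 : 0 < d := Nat.pos_of_ne_zero fun h =>
    (Nat.cast_nonneg (α := ℝ) #F).not_gt (by simpa [h] using hF)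
  -- a vertex outside `S` receives at most `min d #S` of the surviving boundary edges
  have key (w : ℕ) (hw : ∀ v ∉ S, #{u ∈ S | (G.deleteEdges F).Adj u v} ≤ w) :
      γ * d * #S / 2 < w * #((G.deleteEdges F).vertexBoundary S) := by
    have h1 := hG S hS1 hS
    have h2 : (edgeBoundaryCard G S : ℝ) ≤ w * #((G.deleteEdges F).vertexBoundary S) + #F := by
      exact_mod_cast (edgeBoundaryCard_le_deleteEdges_add G F S).trans
        (add_le_add (edgeBoundaryCard_le_mul_card_vertexBoundary _ S w hw) le_rfl)
    linarith
  have hdeg := key d fun v _ => hd ▸ (card_filter_adj_le_maxDegree _ S v).trans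
    (maxDegree_mono (deleteEdges_le _))
  have hcard := key #S fun v _ => card_filter_le _ _
  constructor
  · exact lt_of_mul_lt_mul_left (a := (d : ℝ)) (by linarith) (Nat.cast_nonneg d)
  · exact lt_of_mul_lt_mul_left (a := (#S : ℝ)) (by linarith) (Nat.cast_nonneg _)

lemma exists_radius_lt_card_setBall (hd : G.maxDegree = d) (hγ : 0 < γ)
    (hG : CheegerAtLeast G (γ * d)) {F : Finset (Sym2 (Fin n))} {m : ℕ} (hmn : (m : ℝ) ≤ n / 2)
    (hF : (#F : ℝ) < γ * d * m / 2) {U : Finset (Fin n)} (hU : m ≤ #U) :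
    ∃ r : ℕ, (n : ℝ) / 2 < #((G.deleteEdges F).setBall U r) ∧
      (r : ℝ) ≤ 1 + logb (1 + γ / 2) (n / (m + γ * d / 2)) := by
  have hm0 : 0 < m := Nat.pos_of_ne_zero fun h =>
    (Nat.cast_nonneg (α := ℝ) #F).not_gt (by simpa [h] using hF)
  have hd0 : 0 < d := Nat.pos_of_ne_zero fun h =>
    (Nat.cast_nonneg (α := ℝ) #F).not_gt (by simpa [h] using hF)
  have hm (i : ℕ) : (m : ℝ) ≤ #((G.deleteEdges F).setBall U i) := by
    exact_mod_cast hU.trans (card_le_card (subset_setBall _ U i))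
  have hFi (i : ℕ) : (#F : ℝ) < γ * d * #((G.deleteEdges F).setBall U i) / 2 :=
    hF.trans_le (by gcongr; exact_mod_cast hm i)
  have hn : 2 ≤ n := by
    have : (1 : ℝ) ≤ m := by exact_mod_cast hm0
    have : (2 : ℝ) ≤ n := by linarith
    exact_mod_cast this
  have hγ1 := le_one_of_cheegerAtLeast hd hd0 hn hG
  have hdn : (d : ℝ) + 1 ≤ n := by
    have : Nonempty (Fin n) := ⟨⟨0, by omega⟩⟩
    exact_mod_cast (Fintype.card_fin n ▸ hd ▸ G.maxDegree_lt_card_verts : d < n)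
  refine exists_le_one_add_logb_of_growth (a := fun i => (#((G.deleteEdges F).setBall U i) : ℝ))
    (by linarith) (by linarith) (by positivity) (by nlinarith) (fun h => ?_) (fun i h => ?_)
  · have := (card_vertexBoundary_deleteEdges_gt hd hG h (hFi 0)).2
    simp only [card_setBall_succ, Nat.cast_add]
    linarith [hm 0]
  · have := (card_vertexBoundary_deleteEdges_gt hd hG h (hFi i)).1
    simp only [card_setBall_succ, Nat.cast_add]
    linarith

lemma exists_short_path_avoiding (hd : G.maxDegree = d) (hγ : 0 < γ)
    (hG : CheegerAtLeast G (γ * d)) {U₁ U₂ : Finset (Fin n)} (hdisj : Disjoint U₁ U₂)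
    {F : Finset (Sym2 (Fin n))} (hF : (#F : ℝ) < γ * d * (min #U₁ #U₂ : ℕ) / 2) :
    ∃ p : Σ (u : Fin n) (v : Fin n), G.Walk u v,
      (p.1 ∈ U₁ ∧ p.2.1 ∈ U₂ ∧ p.2.2.IsPath ∧ (p.2.2.length : ℝ)
        ≤ 2 + 2 * logb (1 + γ / 2) (n / ((min #U₁ #U₂ : ℕ) + γ * d / 2))) ∧
      ∀ e ∈ p.2.2.edges, e ∉ F := by
  set m := min #U₁ #U₂
  have hmn : (m : ℝ) ≤ n / 2 := by
    have : #U₁ + #U₂ ≤ n := by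
      simpa [card_union_of_disjoint hdisj] using card_le_univ (U₁ ∪ U₂)
    have : 2 * m ≤ n := by omega
    rw [le_div_iff₀ two_pos]
    exact_mod_cast (mul_comm 2 m ▸ this)
  obtain ⟨r₁, hB₁, hr₁⟩ := exists_radius_lt_card_setBall hd hγ hG hmn hF (min_le_left _ _)
  obtain ⟨r₂, hB₂, hr₂⟩ := exists_radius_lt_card_setBall hd hγ hG hmn hF (min_le_right _ _)
  have hcard : #(univ : Finset (Fin n)) < #((G.deleteEdges F).setBall U₁ r₁) +
      #((G.deleteEdges F).setBall U₂ r₂) := by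
    rw [card_univ, Fintype.card_fin]
    have : (n : ℝ) < #((G.deleteEdges F).setBall U₁ r₁) + #((G.deleteEdges F).setBall U₂ r₂) := by
      linarith
    exact_mod_cast this
  obtain ⟨x, hx⟩ := inter_nonempty_of_card_lt_card_add_card (subset_univ _) (subset_univ _) hcard
  obtain ⟨hx₁, hx₂⟩ := mem_inter.1 hx
  obtain ⟨u, hu, p₁, hp₁⟩ := exists_walk_of_mem_setBall _ _ hx₁
  obtain ⟨v, hv, p₂, hp₂⟩ := exists_walk_of_mem_setBall _ _ hx₂
  let q := (p₁.append p₂.reverse).bypass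
  have hq : (q.length : ℝ) ≤ r₁ + r₂ := by
    have := (p₁.append p₂.reverse).length_bypass_le_length
    rw [Walk.length_append, Walk.length_reverse] at this
    exact_mod_cast this.trans (add_le_add hp₁ hp₂)
  refine ⟨⟨u, v, q.mapLe (deleteEdges_le _)⟩, ⟨hu, hv, (Walk.bypass_isPath _).mapLe _, ?_⟩,
    fun e he heF => ?_⟩
  · rw [Walk.length_mapLe]
    linarith
  · rw [Walk.edges_mapLe_eq_edges] at he
    exact (edgeSet_deleteEdges _ ▸ q.edges_subset_edgeSet he).2 heF

end Cheeger

theorem edge_disjoint_paths_of_cheeger_general {n : ℕ} (G : SimpleGraph (Fin n))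
    [DecidableRel G.Adj] (d : ℕ) (hd : G.maxDegree = d) (γ : ℝ) (hγ : 0 < γ)
    (hCheeger : ∀ U : Finset (Fin n), 1 ≤ U.card → (U.card : ℝ) ≤ n / 2 →
      γ * d * U.card ≤ edgeBoundaryCard G U)
    (U₁ U₂ : Finset (Fin n)) (hdisj : Disjoint U₁ U₂) :
    ∃ (k : ℕ) (P : Fin k → Σ (u : Fin n) (v : Fin n), G.Walk u v),
      (γ * d * (min U₁.card U₂.card : ℕ) /
          (2 * (2 + 2 * Real.logb (1 + γ / 2)
            ((n : ℝ) / ((min U₁.card U₂.card : ℕ) + γ * d / 2)))) ≤ k)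
      ∧ (∀ i, (P i).1 ∈ U₁ ∧ (P i).2.1 ∈ U₂ ∧ (P i).2.2.IsPath
          ∧ ((P i).2.2.length : ℝ)
              ≤ 2 + 2 * Real.logb (1 + γ / 2)
                  ((n : ℝ) / ((min U₁.card U₂.card : ℕ) + γ * d / 2)))
      ∧ (∀ i j, i ≠ j → List.Disjoint (P i).2.2.edges (P j).2.2.edges) := by
  set L := 2 + 2 * logb (1 + γ / 2) (n / ((min U₁.card U₂.card : ℕ) + γ * d / 2))
  have hk (j : ℕ) (hj : j < ⌈γ * d * (min U₁.card U₂.card : ℕ) / (2 * L)⌉₊) :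
      (j : ℝ) * L < γ * d * (min U₁.card U₂.card : ℕ) / 2 := by
    have hj := Nat.lt_ceil.1 hj
    have hL : 0 < L := by
      by_contra! hL
      have : 0 ≤ γ * d * (min U₁.card U₂.card : ℕ) := by positivity
      linarith [div_nonpos_of_nonneg_of_nonpos this (by linarith : 2 * L ≤ 0),
        (Nat.cast_nonneg j : (0 : ℝ) ≤ j)]
    rw [lt_div_iff₀ (by positivity)] at hj
    linarith
  obtain ⟨P, hP, hPdisj⟩ := exists_pairwise_edgeDisjoint_walks _ (fun p hp => hp.2.2.2) hk
    fun F hF => exists_short_path_avoiding hd hγ hCheeger hdisj hF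
  exact ⟨_, P, Nat.le_ceil _, hP, hPdisj⟩

/-- If `h(G) ≥ γ d`, then between any two disjoint vertex sets `U₁, U₂` there are
at least `γ d min(|U₁|,|U₂|)/(2ℓ)` pairwise edge-disjoint paths of length at most
`ℓ = 2 + 2 log_{1+γ/2}(n/(min(|U₁|,|U₂|) + γ d / 2))`. -/
theorem edge_disjoint_paths_of_cheeger {n : ℕ} (G : SimpleGraph (Fin n))
    [DecidableRel G.Adj] (d : ℕ) (hd : G.maxDegree = d) (γ : ℝ) (hγ : 0 < γ)
    (hCheeger : ∀ U : Finset (Fin n), 1 ≤ U.card → (U.card : ℝ) ≤ n / 2 →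
      γ * d * U.card ≤ edgeBoundaryCard G U)
    (U₁ U₂ : Finset (Fin n)) (hdisj : Disjoint U₁ U₂)
    (hne₁ : U₁.Nonempty) (hne₂ : U₂.Nonempty) :
    ∃ (k : ℕ) (P : Fin k → Σ (u : Fin n) (v : Fin n), G.Walk u v),
      (γ * d * (min U₁.card U₂.card : ℕ) /
          (2 * (2 + 2 * Real.logb (1 + γ / 2)
            ((n : ℝ) / ((min U₁.card U₂.card : ℕ) + γ * d / 2)))) ≤ k)
      ∧ (∀ i, (P i).1 ∈ U₁ ∧ (P i).2.1 ∈ U₂ ∧ (P i).2.2.IsPath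
          ∧ ((P i).2.2.length : ℝ)
              ≤ 2 + 2 * Real.logb (1 + γ / 2)
                  ((n : ℝ) / ((min U₁.card U₂.card : ℕ) + γ * d / 2)))
      ∧ (∀ i j, i ≠ j → List.Disjoint (P i).2.2.edges (P j).2.2.edges) :=
  edge_disjoint_paths_of_cheeger_general G d hd γ hγ hCheeger U₁ U₂ hdisj
end
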